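/- Let ω be a weight with Young conjugate φ* of φ(t)=ω(e^t), and suppose ω(t) ≥ a + b·log(1+t) for all t ≥ 0, with b > 0. Then for every λ > 0 and t ≥ 1, inf_{N∈ℕ₀} t^{-2N} e^{(λ+2/b)φ*(2N/(λ+2/b))} ≤ e^{-λω(t)} e^{-2a/b}. -/

import Mathlib

/-!
Write `φ(s) = ω(eˢ)` and `u = log t`. Since `φ` is convex and nondecreasing, its right derivative
`g ≥ 0` at `u` gives a supporting line `φ u + g (s - u) ≤ φ s`, hence `φ*(y) ≤ u g - ω(t)` for
every `y ≤ g`. Taking `N = ⌊(λ + 2/b) g / 2⌋` makes `y = 2N/(λ + 2/b)` fall short of `g` by less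
than `2/(λ + 2/b)`; this loss costs at most `2u` in the exponent, which the logarithmic lower
bound absorbs as `2u ≤ (2/b)(ω(t) - a)`.
-/

open Set Real

lemma ConvexOn.add_rightDeriv_mul_sub_le {S : Set ℝ} {f : ℝ → ℝ} {x y : ℝ}
    (hf : ConvexOn ℝ S f) (hx : x ∈ interior S) (hy : y ∈ S) :
    f x + derivWithin f (Ioi x) x * (y - x) ≤ f y := by
  rcases lt_trichotomy y x with hyx | rfl | hxy
  · have h := (hf.slope_le_leftDeriv_of_mem_interior hy hx hyx).trans
      (hf.leftDeriv_le_rightDeriv_of_mem_interior hx)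
    rw [slope_def_field, div_le_iff₀ (sub_pos.2 hyx)] at h
    linarith
  · simp
  · have h := hf.rightDeriv_le_slope_of_mem_interior hx hy hxy
    rw [slope_def_field, le_div_iff₀ (sub_pos.2 hxy)] at h
    linarith

lemma IsLUB.le_mul_sub_of_supporting_line {φ : ℝ → ℝ} {u g y c : ℝ}
    (hsupp : ∀ s, 0 ≤ s → φ u + g * (s - u) ≤ φ s) (hyg : y ≤ g)
    (hc : IsLUB {z : ℝ | ∃ s, 0 ≤ s ∧ z = s * y - φ s} c) :
    c ≤ u * g - φ u := by
  refine hc.2 ?_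
  rintro _ ⟨s, hs, rfl⟩
  nlinarith [hsupp s hs, mul_le_mul_of_nonneg_left hyg hs]

theorem inf_powers_le_exp_weight_general (ω : ℝ → ℝ) (φs : ℝ → ℝ) (a b : ℝ) (hb : 0 < b)
    (hω_mono : ∀ s t, 0 ≤ s → s ≤ t → ω s ≤ ω t)
    (hconv : ConvexOn ℝ Set.univ fun t => ω (Real.exp t))
    (hφs : ∀ t, 0 ≤ t →
      IsLUB {y : ℝ | ∃ s, 0 ≤ s ∧ y = s * t - ω (Real.exp s)} (φs t))
    (hlog : ∀ t, 0 ≤ t → a + b * Real.log (1 + t) ≤ ω t)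
    (lam : ℝ) (hlam : 0 < lam) (t : ℝ) (ht : 1 ≤ t) :
    (⨅ N : ℕ, t ^ (-(2 * (N : ℝ))) *
        Real.exp ((lam + 2 / b) * φs (2 * (N : ℝ) / (lam + 2 / b))))
      ≤ Real.exp (-lam * ω t) * Real.exp (-2 * a / b) := by
  set L := lam + 2 / b
  have hL : 0 < L := by positivity
  have ht0 : 0 < t := one_pos.trans_le ht
  have hu : 0 ≤ log t := log_nonneg ht
  set g := derivWithin (fun s => ω (exp s)) (Ioi (log t)) (log t)
  have hg : 0 ≤ g := MonotoneOn.derivWithin_nonneg fun s _ r _ hsr =>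
    hω_mono _ _ (exp_pos s).le (exp_le_exp.2 hsr)
  set N := ⌊L * g / 2⌋₊
  have hN_le : 2 * (N : ℝ) ≤ L * g := by
    linarith [Nat.floor_le (by positivity : 0 ≤ L * g / 2)]
  have hN_gap : L * g < 2 * (N : ℝ) + 2 := by linarith [Nat.lt_floor_add_one (L * g / 2)]
  have hconj : φs (2 * N / L) ≤ log t * g - ω t := by
    simpa [exp_log ht0] using IsLUB.le_mul_sub_of_supporting_line
      (fun s _ => hconv.add_rightDeriv_mul_sub_le (x := log t) (by simp) (mem_univ s))
      ((div_le_iff₀' hL).2 hN_le) (hφs _ (by positivity))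
  have hlogt : 2 * log t ≤ 2 / b * (ω t - a) := by
    have hlog_mono : b * log t ≤ b * log (1 + t) :=
      mul_le_mul_of_nonneg_left (log_le_log ht0 (by linarith)) hb.le
    rw [div_mul_eq_mul_div, le_div_iff₀ hb]
    linarith [hlog t ht0.le]
  refine (ciInf_le ⟨0, by rintro _ ⟨M, rfl⟩; positivity⟩ N).trans ?_
  rw [rpow_def_of_pos ht0, ← exp_add, ← exp_add, exp_le_exp]
  linear_combination mul_le_mul_of_nonneg_left hconj hL.le +
    mul_le_mul_of_nonneg_left hN_gap.le hu + hlogt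

/-- Let `ω` be a weight with Young conjugate `φ*` of `φ(t) = ω(e^t)`, and suppose
`ω(t) ≥ a + b·log(1+t)` for all `t ≥ 0` with `b > 0`. Then for every `λ > 0` and
`t ≥ 1`, `inf_{N ∈ ℕ₀} t^(-2N) e^((λ+2/b) φ*(2N/(λ+2/b))) ≤ e^(-λ ω(t)) e^(-2a/b)`. -/
theorem inf_powers_le_exp_weight (ω : ℝ → ℝ) (φs : ℝ → ℝ) (a b : ℝ) (hb : 0 < b)
    (hω_mono : ∀ s t, 0 ≤ s → s ≤ t → ω s ≤ ω t)
    (hω_nonneg : ∀ t, 0 ≤ t → 0 ≤ ω t)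
    (hconv : ConvexOn ℝ Set.univ fun t => ω (Real.exp t))
    (hφs : ∀ t, 0 ≤ t →
      IsLUB {y : ℝ | ∃ s, 0 ≤ s ∧ y = s * t - ω (Real.exp s)} (φs t))
    (hlog : ∀ t, 0 ≤ t → a + b * Real.log (1 + t) ≤ ω t)
    (lam : ℝ) (hlam : 0 < lam) (t : ℝ) (ht : 1 ≤ t) :
    (⨅ N : ℕ, t ^ (-(2 * (N : ℝ))) *
        Real.exp ((lam + 2 / b) * φs (2 * (N : ℝ) / (lam + 2 / b))))
      ≤ Real.exp (-lam * ω t) * Real.exp (-2 * a / b) :=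
  inf_powers_le_exp_weight_general ω φs a b hb hω_mono hconv hφs hlog lam hlam t ht
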